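/- Let q ∈ ℕ, 1 ≤ n ≤ q, and let {φ_k}_{k=1}^n ⊂ C[0,q]_Z be a T_Z-system. A polynomial p* ∈ L_n is a best uniform approximant of f ∈ C[0,q]_Z if and only if p* admits an alternance set of length n+1. -/

import Mathlib

/-!
If `p*` has an alternance and `p` were a better approximant, `p* - p` would alternate in sign at
the `n + 1` alternance points and hence have `n` zeros, which a `T_ℤ`-system forbids.

Conversely, let `p*` be best with error `e = p* - f`. Kolmogorov's criterion and a separation
argument put `0` in the convex hull of the vectors `e(ν) (φ_k(ν))_k` over the extremal points `ν`.
By Carathéodory, `0` is a positive combination of at most `n + 1` of them, and of at least `n + 1`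
because any `n` columns `(φ_k(ν))_k` are independent. The key tool is that any `n - 1` points are
exactly the zero set of some nontrivial polynomial: taking all support points but two consecutive
ones `μ_j < μ_{j+1}`, that polynomial has no zero in `(μ_j, μ_{j+1}]`, hence the same sign at both,
which forces `e(μ_j)` and `e(μ_{j+1})` to have opposite signs.
-/

namespace DiscPaper

/-- `ν` is a zero (of the first or second type) of the discrete function `f` on `[0,q]_ℤ`. -/
def IsZero (q : ℕ) (f : ℕ → ℝ) (ν : ℕ) : Prop :=
  (ν ≤ q ∧ f ν = 0) ∨ (1 ≤ ν ∧ ν ≤ q ∧ f (ν - 1) * f ν < 0)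

/-- `N q f` is the number of zeros (of both types) of `f` on `[0,q]_ℤ`. -/
noncomputable def N (q : ℕ) (f : ℕ → ℝ) : ℕ := {ν : ℕ | IsZero q f ν}.ncard

/-- `N₀ q f` is the number of zeros of the first type of `f` on `[0,q]_ℤ`. -/
noncomputable def N0 (q : ℕ) (f : ℕ → ℝ) : ℕ := {ν : ℕ | ν ≤ q ∧ f ν = 0}.ncard

/-- Number of sign changes of `g` on `[0,q]_ℤ`. -/
noncomputable def signChanges (q : ℕ) (g : ℕ → ℝ) : ℕ :=
  {ν : ℕ | 1 ≤ ν ∧ ν ≤ q ∧ g (ν - 1) * g ν < 0}.ncard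

/-- `g` is obtained from `f` by replacing all its zero values on `[0,q]_ℤ` by
arbitrary nonzero values. -/
def Admissible (q : ℕ) (f g : ℕ → ℝ) : Prop :=
  (∀ ν ≤ q, g ν ≠ 0) ∧ ∀ ν ≤ q, f ν ≠ 0 → g ν = f ν

/-- `S⁻(f)`: least number of sign changes over all admissible replacements. -/
noncomputable def Sminus (q : ℕ) (f : ℕ → ℝ) : ℕ :=
  sInf {s | ∃ g, Admissible q f g ∧ signChanges q g = s}

/-- `S⁺(f)`: largest number of sign changes over all admissible replacements. -/
noncomputable def Splus (q : ℕ) (f : ℕ → ℝ) : ℕ :=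
  sSup {s | ∃ g, Admissible q f g ∧ signChanges q g = s}
/-- The polynomial `Σ aₖ φₖ` with respect to the system `φ`. -/
noncomputable def poly (n : ℕ) (φ : Fin n → ℕ → ℝ) (a : Fin n → ℝ) : ℕ → ℝ :=
  fun ν => ∑ k, a k * φ k ν

/-- Linear independence of the discrete functions `φ₁,…,φₙ` on `[0,q]_ℤ`. -/
def LinIndepOn (q n : ℕ) (φ : Fin n → ℕ → ℝ) : Prop :=
  LinearIndependent ℝ (fun k : Fin n => fun ν : Fin (q + 1) => φ k ν)

/-- `{φₖ}` is a `T_ℤ`-system on `[0,q]_ℤ`: every nontrivial polynomial has at most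
`n - 1` zeros (of both types). -/
def IsTZ (q n : ℕ) (φ : Fin n → ℕ → ℝ) : Prop :=
  ∀ a : Fin n → ℝ, a ≠ 0 → N q (poly n φ a) ≤ n - 1

/-- The uniform norm of a discrete function on `[0,q]_ℤ`. -/
noncomputable def normZ (q : ℕ) (f : ℕ → ℝ) : ℝ :=
  (Finset.range (q + 1)).sup' (Finset.nonempty_range_iff.mpr q.succ_ne_zero)
    (fun ν => |f ν|)

/-- `poly n φ a` is a best uniform approximant of `f` from `L_n`. -/
noncomputable def IsBestApprox (q n : ℕ) (φ : Fin n → ℕ → ℝ) (f : ℕ → ℝ)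
    (a : Fin n → ℝ) : Prop :=
  ∀ b : Fin n → ℝ,
    normZ q (fun ν => f ν - poly n φ a ν) ≤ normZ q (fun ν => f ν - poly n φ b ν)

/-- The best approximant `poly n φ a` of `f` admits a Chebyshev alternance set of
length `n+1`. -/
noncomputable def HasAlternance (q n : ℕ) (φ : Fin n → ℕ → ℝ) (f : ℕ → ℝ)
    (a : Fin n → ℝ) : Prop :=
  ∃ ν : Fin (n + 1) → ℕ, StrictMono ν ∧ (∀ i, ν i ≤ q) ∧
    ∃ ε : ℝ, (ε = 1 ∨ ε = -1) ∧
      ∀ i : Fin (n + 1),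
        ε * (-1) ^ (i : ℕ) * (poly n φ a (ν i) - f (ν i)) =
          normZ q (fun μ => poly n φ a μ - f μ)

open Filter Topology Function

section Norm

variable {q : ℕ}

lemma abs_le_normZ (f : ℕ → ℝ) {ν : ℕ} (hν : ν ≤ q) : |f ν| ≤ normZ q f :=
  Finset.le_sup' (fun ν => |f ν|) (Finset.mem_range.mpr (Nat.lt_succ_of_le hν))

lemma normZ_nonneg (f : ℕ → ℝ) : 0 ≤ normZ q f :=
  (abs_nonneg (f 0)).trans (abs_le_normZ f q.zero_le)

lemma normZ_lt_iff {f : ℕ → ℝ} {c : ℝ} : normZ q f < c ↔ ∀ ν ≤ q, |f ν| < c := by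
  simp [normZ, Finset.sup'_lt_iff]

lemma normZ_sub_comm (f g : ℕ → ℝ) :
    normZ q (fun ν => f ν - g ν) = normZ q (fun ν => g ν - f ν) := by
  simp only [normZ, abs_sub_comm]

end Norm

section Zeros

variable {q : ℕ}

lemma finite_setOf_isZero (p : ℕ → ℝ) : {ν | IsZero q p ν}.Finite :=
  (Set.finite_Iic q).subset fun ν hν => by rcases hν with ⟨h, _⟩ | ⟨_, h, _⟩ <;> exact h

lemma exists_isZero_of_mul_neg {p : ℕ → ℝ} {s t : ℕ} (hst : s < t) (ht : t ≤ q)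
    (h : p s * p t < 0) : ∃ μ, s < μ ∧ μ ≤ t ∧ IsZero q p μ := by
  induction t, hst using Nat.le_induction with
  | base => exact ⟨s + 1, by omega, le_rfl, Or.inr ⟨by omega, ht, by simpa using h⟩⟩
  | succ t hst ih =>
    rcases lt_trichotomy (p s * p t) 0 with hneg | hzero | hpos
    · obtain ⟨μ, hsμ, hμt, hμ⟩ := ih (by omega) hneg
      exact ⟨μ, hsμ, by omega, hμ⟩
    · have hps : p s ≠ 0 := fun h0 => by simp [h0] at h
      exact ⟨t, by omega, by omega, Or.inl ⟨by omega, (mul_eq_zero.mp hzero).resolve_left hps⟩⟩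
    · refine ⟨t + 1, by omega, le_rfl, Or.inr ⟨by omega, ht, ?_⟩⟩
      rw [Nat.add_sub_cancel]
      by_contra! hnn
      nlinarith [mul_neg_of_pos_of_neg hpos h, mul_nonneg (sq_nonneg (p s)) hnn]

lemma le_N_of_mul_neg {m : ℕ} {p : ℕ → ℝ} {ν : Fin (m + 1) → ℕ} (hν : StrictMono ν)
    (hνq : ∀ i, ν i ≤ q) (h : ∀ i : Fin m, p (ν i.castSucc) * p (ν i.succ) < 0) :
    m ≤ N q p := by
  choose μ hνμ hμν hμ using fun i : Fin m =>
    exists_isZero_of_mul_neg (hν i.castSucc_lt_succ) (hνq _) (h i)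
  have hμmono : StrictMono μ := fun i j hij =>
    calc μ i ≤ ν i.succ := hμν i
      _ ≤ ν j.castSucc := hν.monotone (Fin.succ_le_castSucc_iff.mpr hij)
      _ < μ j := hνμ j
  calc m = (Set.range μ).ncard := by
        rw [Set.ncard_range_of_injective hμmono.injective, Nat.card_fin]
    _ ≤ N q p := Set.ncard_le_ncard (Set.range_subset_iff.mpr hμ) (finite_setOf_isZero p)

end Zeros

lemma mul_neg_of_forall_pos_neg_one_pow_mul {m : ℕ} {x : Fin (m + 1) → ℝ} {ε : ℝ}
    (h : ∀ i : Fin (m + 1), 0 < ε * (-1) ^ (i : ℕ) * x i) (j : Fin m) :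
    x j.castSucc * x j.succ < 0 := by
  have h₁ := h j.castSucc
  have h₂ := h j.succ
  simp only [Fin.val_castSucc, Fin.val_succ, pow_succ] at h₁ h₂
  by_contra! hx
  nlinarith [mul_pos h₁ h₂, mul_nonneg (sq_nonneg (ε * (-1) ^ (j : ℕ))) hx]

lemma exists_sign_neg_one_pow_mul_eq {m : ℕ} {x : Fin (m + 1) → ℝ} {E : ℝ} (hE : 0 < E)
    (habs : ∀ i, |x i| = E) (hx : ∀ j : Fin m, x j.castSucc * x j.succ ≤ 0) :
    ∃ ε : ℝ, (ε = 1 ∨ ε = -1) ∧ ∀ i : Fin (m + 1), ε * (-1) ^ (i : ℕ) * x i = E := by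
  have hflip : ∀ j : Fin m, x j.succ = -x j.castSucc := fun j =>
    (abs_eq_abs.mp ((habs j.succ).trans (habs j.castSucc).symm)).resolve_left fun h => by
      have h0 : x j.castSucc = 0 := by nlinarith [hx j]
      have := habs j.castSucc
      rw [h0, abs_zero] at this
      exact hE.ne this
  have hx0 : ∀ i : Fin (m + 1), x i = (-1) ^ (i : ℕ) * x 0 := by
    intro i
    induction i using Fin.induction with
    | zero => simp
    | succ j ih => rw [hflip, ih, Fin.val_castSucc, Fin.val_succ, pow_succ]; ring
  have hsq (k : ℕ) : ((-1 : ℝ) ^ k) * (-1) ^ k = 1 := by rw [← mul_pow]; norm_num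
  rcases (abs_eq hE.le).mp (habs 0) with h0 | h0
  · exact ⟨1, Or.inl rfl, fun i => by rw [hx0, h0]; linear_combination E * hsq i⟩
  · exact ⟨-1, Or.inr rfl, fun i => by rw [hx0, h0]; linear_combination E * hsq i⟩

lemma eventually_abs_add_mul_lt {x y E : ℝ} (hx : |x| ≤ E) (hxy : |x| = E → x * y < 0) :
    ∀ᶠ θ in 𝓝[>] (0 : ℝ), |x + θ * y| < E := by
  rcases hx.lt_or_eq with hlt | heq
  · have hlim : Tendsto (fun θ : ℝ => |x + θ * y|) (𝓝 0) (𝓝 |x|) :=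
      (by fun_prop : Continuous fun θ : ℝ => |x + θ * y|).tendsto' 0 _ (by simp)
    exact nhdsWithin_le_nhds (hlim.eventually (gt_mem_nhds hlt))
  · have hlim : Tendsto (fun θ : ℝ => 2 * (x * y) + θ * y ^ 2) (𝓝 0) (𝓝 (2 * (x * y))) :=
      (by fun_prop : Continuous fun θ : ℝ => 2 * (x * y) + θ * y ^ 2).tendsto' 0 _ (by simp)
    have hxy₀ : 2 * (x * y) < 0 := by linarith [hxy heq]
    filter_upwards [nhdsWithin_le_nhds (hlim.eventually (gt_mem_nhds hxy₀)),
      self_mem_nhdsWithin] with θ hθ (hθ₀ : 0 < θ)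
    rw [← heq, ← sq_lt_sq]
    nlinarith [mul_neg_of_pos_of_neg hθ₀ hθ]

lemma zero_mem_convexHull_of_forall_exists_dotProduct_nonneg {n : ℕ} {K : Set (Fin n → ℝ)}
    (hK : K.Finite) (h : ∀ d : Fin n → ℝ, ∃ y ∈ K, 0 ≤ d ⬝ᵥ y) :
    (0 : Fin n → ℝ) ∈ convexHull ℝ K := by
  by_contra h0
  obtain ⟨L, u, hL0, hLK⟩ := geometric_hahn_banach_point_closed (convex_convexHull ℝ K)
    (hK.isClosed_convexHull (𝕜 := ℝ)) h0
  obtain ⟨y, hyK, hy⟩ := h fun k => -L fun j => if k = j then 1 else 0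
  have hLy : L y = -((fun k => -L fun j => if k = j then 1 else 0) ⬝ᵥ y) := by
    rw [← ContinuousLinearMap.coe_coe, LinearMap.pi_apply_eq_sum_univ]
    simp [dotProduct, mul_comm]
  linarith [hLK y (subset_convexHull ℝ K hyK), map_zero L]

lemma exists_equiv_fin_strictMono {α ι : Type*} [LinearOrder α] [Fintype ι] {t : ι → α}
    (ht : Injective t) {m : ℕ} (hm : Fintype.card ι = m) :
    ∃ σ : Fin m ≃ ι, StrictMono (t ∘ σ) := by
  let _ : LinearOrder ι := LinearOrder.lift' t ht
  exact ⟨(monoEquivOfFin ι hm).toEquiv, fun i j hij => (monoEquivOfFin ι hm).strictMono hij⟩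

section Poly

variable {n : ℕ} {φ : Fin n → ℕ → ℝ}

lemma poly_eq_dotProduct (a : Fin n → ℝ) (ν : ℕ) : poly n φ a ν = a ⬝ᵥ swap φ ν := rfl

lemma poly_sub (a b : Fin n → ℝ) (ν : ℕ) :
    poly n φ (a - b) ν = poly n φ a ν - poly n φ b ν := by
  simp only [poly_eq_dotProduct, sub_dotProduct]

lemma poly_add_smul (a d : Fin n → ℝ) (θ : ℝ) (ν : ℕ) :
    poly n φ (a + θ • d) ν = poly n φ a ν + θ * poly n φ d ν := by
  simp only [poly_eq_dotProduct, add_dotProduct, smul_dotProduct, smul_eq_mul]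

lemma sum_mul_poly_eq_zero {ι : Type*} [Fintype ι] {g : ι → ℝ} {t : ι → ℕ}
    (hg : ∑ i, g i • swap φ (t i) = 0) (c : Fin n → ℝ) : ∑ i, g i * poly n φ c (t i) = 0 := by
  simp only [poly_eq_dotProduct, ← smul_eq_mul, ← dotProduct_smul, ← dotProduct_sum, hg,
    dotProduct_zero]

end Poly

namespace IsTZ

variable {q n : ℕ} {φ : Fin n → ℕ → ℝ}

lemma N_lt (hTZ : IsTZ q n φ) {c : Fin n → ℝ} (hc : c ≠ 0) : N q (poly n φ c) < n := by
  have hn : n ≠ 0 := by rintro rfl; exact hc (Subsingleton.elim _ _)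
  have := hTZ c hc
  omega

lemma exists_poly_zeros_eq (hTZ : IsTZ q n φ) {S : Finset ℕ} (hSq : ∀ ν ∈ S, ν ≤ q)
    (hS : S.card + 1 = n) :
    ∃ c ≠ 0, (∀ ν ∈ S, poly n φ c ν = 0) ∧ ∀ ν, IsZero q (poly n φ c) ν → ν ∈ S := by
  let M : Matrix (Fin n) S ℝ := Matrix.of fun k ν => φ k ν
  have hker : LinearMap.ker M.vecMulLinear ≠ ⊥ := LinearMap.ker_ne_bot_of_finrank_lt (by
    rw [Module.finrank_fintype_fun_eq_card, Module.finrank_fin_fun, Fintype.card_coe]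
    omega)
  obtain ⟨c, hcM, hc⟩ := (Submodule.ne_bot_iff _).mp hker
  have hvanish : ∀ ν ∈ S, poly n φ c ν = 0 := fun ν hν => congrFun hcM ⟨ν, hν⟩
  refine ⟨c, hc, hvanish, fun ν hν => ?_⟩
  have hsub : (S : Set ℕ) ⊆ {ν | IsZero q (poly n φ c) ν} :=
    fun ν hν => Or.inl ⟨hSq ν hν, hvanish ν hν⟩
  have hle : {ν | IsZero q (poly n φ c) ν}.ncard ≤ (S : Set ℕ).ncard := by
    have := hTZ.N_lt hc
    rw [Set.ncard_coe_finset]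
    exact Nat.le_of_lt_succ (hS ▸ this)
  rw [← Finset.mem_coe, Set.eq_of_subset_of_ncard_le hsub hle (finite_setOf_isZero _)]
  exact hν

lemma linearIndependent_swap_comp (hTZ : IsTZ q n φ) (hnq : n ≤ q + 1) {ι : Type*} [Fintype ι]
    {t : ι → ℕ} (ht : Injective t) (htq : ∀ i, t i ≤ q) (hcard : Fintype.card ι ≤ n) :
    LinearIndependent ℝ (swap φ ∘ t) := by
  classical
  refine Fintype.linearIndependent_iff.mpr fun g hg i₀ => by_contra fun hgi₀ => ?_
  have hn : 1 ≤ n := (Fintype.card_pos_iff.mpr ⟨i₀⟩).trans_le hcard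
  have hi₀q : t i₀ ∈ Finset.range (q + 1) := Finset.mem_range.mpr (Nat.lt_succ_of_le (htq i₀))
  have hsub : (Finset.univ.erase i₀).image t ⊆ (Finset.range (q + 1)).erase (t i₀) :=
    Finset.image_subset_iff.mpr fun i hi => Finset.mem_erase.mpr
      ⟨ht.ne (Finset.ne_of_mem_erase hi), Finset.mem_range.mpr (Nat.lt_succ_of_le (htq i))⟩
  have hcard_image : ((Finset.univ.erase i₀).image t).card ≤ n - 1 := by
    refine Finset.card_image_le.trans ?_
    rw [Finset.card_erase_of_mem (Finset.mem_univ _), Finset.card_univ]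
    omega
  have hcard_range : n - 1 ≤ ((Finset.range (q + 1)).erase (t i₀)).card := by
    rw [Finset.card_erase_of_mem hi₀q, Finset.card_range]
    omega
  obtain ⟨S, hTS, hSq, hS⟩ := Finset.exists_subsuperset_card_eq hsub hcard_image hcard_range
  obtain ⟨c, -, hvanish, hzeros⟩ := hTZ.exists_poly_zeros_eq (S := S)
    (fun ν hν => Nat.lt_succ_iff.mp (Finset.mem_range.mp (Finset.mem_of_mem_erase (hSq hν))))
    (by omega)
  have hsum := sum_mul_poly_eq_zero hg c
  rw [Fintype.sum_eq_single i₀ fun i hi => by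
    rw [hvanish _ (hTS (Finset.mem_image_of_mem t (Finset.mem_erase.mpr ⟨hi, Finset.mem_univ _⟩))),
      mul_zero]] at hsum
  have hc : poly n φ c (t i₀) ≠ 0 := fun h0 =>
    Finset.notMem_erase (t i₀) _ (hSq (hzeros _ (Or.inl ⟨htq i₀, h0⟩)))
  exact mul_ne_zero hgi₀ hc hsum

lemma mul_nonpos_of_sum_smul_eq_zero (hTZ : IsTZ q n φ) {μ : Fin (n + 1) → ℕ}
    (hμ : StrictMono μ) (hμq : ∀ i, μ i ≤ q) {g : Fin (n + 1) → ℝ}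
    (hg : ∑ i, g i • swap φ (μ i) = 0) (j : Fin n) : g j.castSucc * g j.succ ≤ 0 := by
  classical
  set S := ((Finset.univ.erase j.castSucc).erase j.succ).image μ
  have hjj : j.castSucc ≠ j.succ := j.castSucc_lt_succ.ne
  have hS : S.card + 1 = n := by
    rw [Finset.card_image_of_injective _ hμ.injective,
      Finset.card_erase_of_mem (Finset.mem_erase.mpr ⟨hjj.symm, Finset.mem_univ _⟩),
      Finset.card_erase_of_mem (Finset.mem_univ _), Finset.card_univ, Fintype.card_fin]
    omega
  obtain ⟨c, -, hvanish, hzeros⟩ := hTZ.exists_poly_zeros_eq (S := S)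
    (fun ν hν => by obtain ⟨i, -, rfl⟩ := Finset.mem_image.mp hν; exact hμq i) hS
  set p := poly n φ c
  have hnotS : ∀ ν, μ j.castSucc ≤ ν → ν ≤ μ j.succ → ν ∉ S := by
    intro ν hlo hhi hν
    obtain ⟨i, hi, rfl⟩ := Finset.mem_image.mp hν
    obtain ⟨hi₁, hi₂, -⟩ := Finset.mem_erase.mp hi |>.imp_right Finset.mem_erase.mp
    rw [hμ.le_iff_le, Fin.le_def, Fin.val_castSucc] at hlo
    rw [hμ.le_iff_le, Fin.le_def, Fin.val_succ] at hhi
    rcases (show (i : ℕ) = j ∨ (i : ℕ) = j + 1 by omega) with h | h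
    · exact hi₂ (Fin.ext h)
    · exact hi₁ (Fin.ext h)
  have hμj : μ j.castSucc ≤ μ j.succ := hμ.monotone j.castSucc_lt_succ.le
  have hp : 0 < p (μ j.castSucc) * p (μ j.succ) := by
    by_contra! hnp
    rcases hnp.lt_or_eq with hneg | hzero
    · obtain ⟨ν, hlo, hhi, hν⟩ := exists_isZero_of_mul_neg (hμ j.castSucc_lt_succ) (hμq _) hneg
      exact hnotS ν hlo.le hhi (hzeros ν hν)
    · rcases mul_eq_zero.mp hzero with h | h
      · exact hnotS _ le_rfl hμj (hzeros _ (Or.inl ⟨hμq _, h⟩))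
      · exact hnotS _ hμj le_rfl (hzeros _ (Or.inl ⟨hμq _, h⟩))
  have hsum : g j.castSucc * p (μ j.castSucc) + g j.succ * p (μ j.succ) = 0 := by
    refine (Fintype.sum_eq_add (f := fun i => g i * p (μ i)) _ _ hjj fun i hi => ?_).symm.trans
      (sum_mul_poly_eq_zero hg c)
    rw [hvanish _ (Finset.mem_image_of_mem μ
      (Finset.mem_erase.mpr ⟨hi.2, Finset.mem_erase.mpr ⟨hi.1, Finset.mem_univ _⟩⟩)), mul_zero]
  have hprod : g j.castSucc * g j.succ * (p (μ j.castSucc) * p (μ j.succ)) =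
      -(g j.succ * p (μ j.succ)) ^ 2 := by
    linear_combination (g j.succ * p (μ j.succ)) * hsum
  nlinarith [sq_nonneg (g j.succ * p (μ j.succ))]

end IsTZ

section Approx

variable {q n : ℕ} {φ : Fin n → ℕ → ℝ} {f : ℕ → ℝ} {a : Fin n → ℝ}

lemma IsBestApprox.exists_extremal_mul_poly_nonneg (hbest : IsBestApprox q n φ f a)
    (d : Fin n → ℝ) : ∃ ν ≤ q, |poly n φ a ν - f ν| = normZ q (fun μ => poly n φ a μ - f μ) ∧
      0 ≤ (poly n φ a ν - f ν) * poly n φ d ν := by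
  by_contra! h
  have hev : ∀ᶠ θ in 𝓝[>] (0 : ℝ), ∀ ν ∈ Finset.range (q + 1),
      |poly n φ a ν - f ν + θ * poly n φ d ν| < normZ q (fun μ => poly n φ a μ - f μ) :=
    (Filter.eventually_all_finset _).mpr fun ν hν =>
      have hνq := Nat.lt_succ_iff.mp (Finset.mem_range.mp hν)
      eventually_abs_add_mul_lt (abs_le_normZ (fun μ => poly n φ a μ - f μ) hνq) (h ν hνq)
  obtain ⟨θ, hθ⟩ := hev.exists
  refine (hbest (a + θ • d)).not_gt ?_
  rw [normZ_sub_comm f (poly n φ a), normZ_lt_iff]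
  intro ν hν
  rw [poly_add_smul, abs_sub_comm]
  convert hθ ν (Finset.mem_range.mpr (Nat.lt_succ_of_le hν)) using 2
  ring

lemma hasAlternance_of_normZ_eq_zero (hnq : n ≤ q)
    (h : normZ q (fun μ => poly n φ a μ - f μ) = 0) : HasAlternance q n φ f a := by
  have hle : ∀ i : Fin (n + 1), (i : ℕ) ≤ q := fun i => by omega
  refine ⟨Fin.val, Fin.val_strictMono, hle, 1, Or.inl rfl, fun i => ?_⟩
  have hi := abs_le_normZ (fun μ => poly n φ a μ - f μ) (hle i)
  rw [h, abs_nonpos_iff] at hi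
  rw [hi, h, mul_zero]

lemma IsBestApprox.exists_extremal_annihilator (hbest : IsBestApprox q n φ f a)
    (hnq : n ≤ q) (hTZ : IsTZ q n φ) (hE : 0 < normZ q (fun μ => poly n φ a μ - f μ)) :
    ∃ μ : Fin (n + 1) → ℕ, StrictMono μ ∧ (∀ i, μ i ≤ q) ∧
      (∀ i, |poly n φ a (μ i) - f (μ i)| = normZ q (fun μ => poly n φ a μ - f μ)) ∧
      ∃ w : Fin (n + 1) → ℝ, (∀ i, 0 < w i) ∧
        ∑ i, (w i * (poly n φ a (μ i) - f (μ i))) • swap φ (μ i) = 0 := by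
  set e := fun μ => poly n φ a μ - f μ
  set X := {ν | ν ≤ q ∧ |e ν| = normZ q e}
  have hX : X.Finite := (Set.finite_Iic q).subset fun ν hν => hν.1
  have h0 : (0 : Fin n → ℝ) ∈ convexHull ℝ ((fun ν => e ν • swap φ ν) '' X) := by
    refine zero_mem_convexHull_of_forall_exists_dotProduct_nonneg (hX.image _) fun d => ?_
    obtain ⟨ν, hνq, hνE, hν⟩ := hbest.exists_extremal_mul_poly_nonneg d
    exact ⟨_, ⟨ν, ⟨hνq, hνE⟩, rfl⟩, by rwa [dotProduct_smul, smul_eq_mul]⟩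
  obtain ⟨ι, _, z, w, hzX, hz, hw, hw1, hwz⟩ := eq_pos_convex_span_of_mem_convexHull h0
  choose t htX hzt using fun i => hzX ⟨i, rfl⟩
  have ht : Injective t := fun i j hij => hz.injective (by rw [← hzt, ← hzt, hij])
  have hsum : ∑ i, (w i * e (t i)) • swap φ (t i) = 0 := by
    simpa only [← hzt, smul_smul] using hwz
  have hcard_le : Fintype.card ι ≤ n + 1 := hz.card_le_finrank_succ.trans
    (Nat.succ_le_succ ((Submodule.finrank_le _).trans (Module.finrank_fin_fun ℝ).le))
  have hcard_gt : n < Fintype.card ι := by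
    by_contra! hle
    obtain ⟨i⟩ : Nonempty ι := by
      by_contra! hι
      simp at hw1
    have he : e (t i) ≠ 0 := fun h => by
      have := (htX i).2
      rw [h, abs_zero] at this
      exact hE.ne this
    exact mul_ne_zero (hw i).ne' he <| Fintype.linearIndependent_iff.mp
      (hTZ.linearIndependent_swap_comp (Nat.le_succ_of_le hnq) ht (fun i => (htX i).1) hle) _ hsum i
  obtain ⟨σ, hσ⟩ := exists_equiv_fin_strictMono ht (by omega : Fintype.card ι = n + 1)
  refine ⟨t ∘ σ, hσ, fun i => (htX _).1, fun i => (htX _).2, w ∘ σ, fun i => hw _, ?_⟩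
  rw [← hsum]
  exact Equiv.sum_comp σ fun i => (w i * e (t i)) • swap φ (t i)

theorem IsBestApprox.hasAlternance (hbest : IsBestApprox q n φ f a) (hnq : n ≤ q)
    (hTZ : IsTZ q n φ) : HasAlternance q n φ f a := by
  rcases (normZ_nonneg (fun μ => poly n φ a μ - f μ)).eq_or_lt with hE | hE
  · exact hasAlternance_of_normZ_eq_zero hnq hE.symm
  obtain ⟨μ, hμ, hμq, hμE, w, hw, hsum⟩ := hbest.exists_extremal_annihilator hnq hTZ hE
  refine ⟨μ, hμ, hμq, exists_sign_neg_one_pow_mul_eq hE hμE fun j => ?_⟩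
  have := hTZ.mul_nonpos_of_sum_smul_eq_zero hμ hμq hsum j
  nlinarith [mul_pos (hw j.castSucc) (hw j.succ)]

theorem HasAlternance.isBestApprox (halt : HasAlternance q n φ f a) (hTZ : IsTZ q n φ) :
    IsBestApprox q n φ f a := by
  obtain ⟨ν, hν, hνq, ε, hε, hνE⟩ := halt
  intro b
  by_contra! hb
  rw [normZ_sub_comm f (poly n φ a)] at hb
  have hpos : ∀ i : Fin (n + 1), 0 < ε * (-1) ^ (i : ℕ) * poly n φ (a - b) (ν i) := by
    intro i
    have hsign : |ε * (-1) ^ (i : ℕ)| = 1 := by rcases hε with rfl | rfl <;> simp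
    have hbi := (abs_le_normZ (fun μ => f μ - poly n φ b μ) (hνq i)).trans_lt hb
    have hlow := neg_abs_le (ε * (-1) ^ (i : ℕ) * (f (ν i) - poly n φ b (ν i)))
    rw [abs_mul, hsign, one_mul] at hlow
    calc 0 < normZ q (fun μ => poly n φ a μ - f μ) +
          ε * (-1) ^ (i : ℕ) * (f (ν i) - poly n φ b (ν i)) := by linarith
      _ = ε * (-1) ^ (i : ℕ) * poly n φ (a - b) (ν i) := by
          rw [← hνE i, poly_sub]
          ring
  have hab : a - b ≠ 0 := fun h => by
    have := hpos 0
    rw [h] at this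
    simp [poly] at this
  exact (hTZ.N_lt hab).not_ge (le_N_of_mul_neg hν hνq (mul_neg_of_forall_pos_neg_one_pow_mul hpos))

end Approx

theorem stmt_5_general (q n : ℕ) (hnq : n ≤ q)
    (φ : Fin n → ℕ → ℝ) (hTZ : IsTZ q n φ)
    (f : ℕ → ℝ) (a : Fin n → ℝ) :
    IsBestApprox q n φ f a ↔ HasAlternance q n φ f a :=
  ⟨fun h => h.hasAlternance hnq hTZ, fun h => h.isBestApprox hTZ⟩

/-- Let `{φₖ}ₖ₌₁ⁿ ⊂ C[0,q]_ℤ` (linearly independent, `1 ≤ n ≤ q`) be a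
`T_ℤ`-system. A polynomial `p* ∈ L_n` is a best uniform approximant of `f ∈ C[0,q]_ℤ`
iff `p*` admits an alternance set of length `n+1`. -/
theorem stmt_5 (q n : ℕ) (hn : 1 ≤ n) (hnq : n ≤ q)
    (φ : Fin n → ℕ → ℝ) (hli : LinIndepOn q n φ) (hTZ : IsTZ q n φ)
    (f : ℕ → ℝ) (a : Fin n → ℝ) :
    IsBestApprox q n φ f a ↔ HasAlternance q n φ f a :=
  stmt_5_general q n hnq φ hTZ f a

end DiscPaper
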